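/- The map t : H1 → H defined by t(a⊗h) = d(a)h is a bialgebra homomorphism from the smash product H1 = A⋊H to H: t((a⊗h)(b⊗g)) = t(a⊗h)·t(b⊗g) for all a,b ∈ A and h,g ∈ H, t(1⊗1) = 1, Δ∘t = (t⊗t)∘Δ_{H1}, and ε∘t = ε_{H1}. (Part of Theorem 2.6.) -/
import Mathlib


open TensorProduct

noncomputable section

variable (k A H : Type*) [Field k] [Ring A] [Ring H]
  [HopfAlgebra k A] [HopfAlgebra k H]

/-- `t(a⊗h) = d(a)h`. -/
def tmap (d : A →ₗ[k] H) : A ⊗[k] H →ₗ[k] H :=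
  LinearMap.mul' k H ∘ₗ map d LinearMap.id

/-- `s(a⊗h) = ε(a)h`. -/
def smap : A ⊗[k] H →ₗ[k] H :=
  (TensorProduct.lid k H).toLinearMap ∘ₗ map (Coalgebra.counit : A →ₗ[k] k) LinearMap.id

/-- `i(h) = 1⊗h`. -/
def imap : H →ₗ[k] A ⊗[k] H := TensorProduct.mk k A H 1

/-- The tensor-product coproduct `Δ(a⊗h) = (a₁⊗h₁) ⊗ (a₂⊗h₂)` on `H1 = A ⊗ H`. -/
def comul1 : A ⊗[k] H →ₗ[k] (A ⊗[k] H) ⊗[k] (A ⊗[k] H) :=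
  (tensorTensorTensorComm k A A H H).toLinearMap ∘ₗ
    map (Coalgebra.comul : A →ₗ[k] A ⊗[k] A) (Coalgebra.comul : H →ₗ[k] H ⊗[k] H)

/-- The tensor-product counit `ε(a⊗h) = ε(a)ε(h)` on `H1 = A ⊗ H`. -/
def counit1 : A ⊗[k] H →ₗ[k] k :=
  (TensorProduct.lid k k).toLinearMap ∘ₗ
    map (Coalgebra.counit : A →ₗ[k] k) (Coalgebra.counit : H →ₗ[k] k)

/-- The left coaction `DL = (t⊗id)Δ`. -/
def DLmap (d : A →ₗ[k] H) : A ⊗[k] H →ₗ[k] H ⊗[k] (A ⊗[k] H) :=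
  map (tmap k A H d) LinearMap.id ∘ₗ comul1 k A H

/-- The right coaction `DR = (id⊗s)Δ`. -/
def DRmap : A ⊗[k] H →ₗ[k] (A ⊗[k] H) ⊗[k] H :=
  map LinearMap.id (smap k A H) ∘ₗ comul1 k A H

/-- The second product `(a⊗h)∘(b⊗g) = ε(h) ab ⊗ g`. -/
def circ : (A ⊗[k] H) ⊗[k] (A ⊗[k] H) →ₗ[k] A ⊗[k] H :=
  map (LinearMap.mul' k A)
      ((TensorProduct.lid k H).toLinearMap ∘ₗ map (Coalgebra.counit : H →ₗ[k] k) LinearMap.id)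
    ∘ₗ (tensorTensorTensorComm k A H A H).toLinearMap

/-- The quantum groupoid antipode `𝒮(a⊗h) = S(a₁) ⊗ d(a₂)h`. -/
def SS (d : A →ₗ[k] H) : A ⊗[k] H →ₗ[k] A ⊗[k] H :=
  map (HopfAlgebra.antipode (R := k) : A →ₗ[k] A) (tmap k A H d)
    ∘ₗ (TensorProduct.assoc k A A H).toLinearMap
    ∘ₗ map (Coalgebra.comul : A →ₗ[k] A ⊗[k] A) LinearMap.id

/-- The smash product multiplication `(a⊗h)(b⊗g) = a(h₁▷b) ⊗ h₂g`. -/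
def smashMul (act : H ⊗[k] A →ₗ[k] A) :
    (A ⊗[k] H) ⊗[k] (A ⊗[k] H) →ₗ[k] A ⊗[k] H :=
  map (LinearMap.mul' k A) LinearMap.id
  ∘ₗ (TensorProduct.assoc k A A H).symm.toLinearMap
  ∘ₗ map LinearMap.id
      (map act (LinearMap.mul' k H)
        ∘ₗ (tensorTensorTensorComm k H H A H).toLinearMap)
  ∘ₗ (TensorProduct.assoc k A (H ⊗[k] H) (A ⊗[k] H)).toLinearMap
  ∘ₗ map (map LinearMap.id (Coalgebra.comul : H →ₗ[k] H ⊗[k] H)) LinearMap.id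

/-- The cotensor product `H1□H1`. -/
def cot (d : A →ₗ[k] H) : Set ((A ⊗[k] H) ⊗[k] (A ⊗[k] H)) :=
  {x | (TensorProduct.assoc k (A ⊗[k] H) H (A ⊗[k] H)).toLinearMap
        (map (DRmap k A H) LinearMap.id x) = map LinearMap.id (DLmap k A H d) x}

/-- A Hopf (algebra) crossed module. -/
structure HopfCrossedModule (act : H ⊗[k] A →ₗ[k] A) (d : A →ₗ[k] H) : Prop where
  /-- `(hg)▷a = h▷(g▷a)` -/
  act_mul : ∀ (h g : H) (a : A), act ((h * g) ⊗ₜ[k] a) = act (h ⊗ₜ[k] act (g ⊗ₜ[k] a))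
  /-- `1▷a = a` -/
  act_one : ∀ a : A, act ((1 : H) ⊗ₜ[k] a) = a
  /-- `h▷(ab) = (h₁▷a)(h₂▷b)` -/
  act_mul_alg : act ∘ₗ map LinearMap.id (LinearMap.mul' k A)
      = LinearMap.mul' k A ∘ₗ map act act
          ∘ₗ (tensorTensorTensorComm k H H A A).toLinearMap
          ∘ₗ map (Coalgebra.comul : H →ₗ[k] H ⊗[k] H) LinearMap.id
  /-- `h▷1 = ε(h)1` -/
  act_unit : ∀ h : H, act (h ⊗ₜ[k] (1 : A)) = (Coalgebra.counit h : k) • (1 : A)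
  /-- `Δ(h▷a) = (h₁▷a₁)⊗(h₂▷a₂)` -/
  act_comul : (Coalgebra.comul : A →ₗ[k] A ⊗[k] A) ∘ₗ act
      = map act act ∘ₗ (tensorTensorTensorComm k H H A A).toLinearMap
          ∘ₗ map (Coalgebra.comul : H →ₗ[k] H ⊗[k] H) (Coalgebra.comul : A →ₗ[k] A ⊗[k] A)
  /-- `ε(h▷a) = ε(h)ε(a)` -/
  act_counit : ∀ (h : H) (a : A),
      (Coalgebra.counit (act (h ⊗ₜ[k] a)) : k) = Coalgebra.counit h * Coalgebra.counit a
  /-- `h₁ ⊗ (h₂▷a) = h₂ ⊗ (h₁▷a)` -/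
  act_cocomm : map LinearMap.id act ∘ₗ (TensorProduct.assoc k H H A).toLinearMap
        ∘ₗ map (Coalgebra.comul : H →ₗ[k] H ⊗[k] H) LinearMap.id
      = map LinearMap.id act ∘ₗ (TensorProduct.assoc k H H A).toLinearMap
        ∘ₗ map ((TensorProduct.comm k H H).toLinearMap
              ∘ₗ (Coalgebra.comul : H →ₗ[k] H ⊗[k] H)) LinearMap.id
  /-- `d` is multiplicative -/
  d_mul : ∀ a b : A, d (a * b) = d a * d b
  /-- `d(1) = 1` -/
  d_one : d 1 = 1
  /-- `d` is comultiplicative -/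
  d_comul : (Coalgebra.comul : H →ₗ[k] H ⊗[k] H) ∘ₗ d
      = map d d ∘ₗ (Coalgebra.comul : A →ₗ[k] A ⊗[k] A)
  /-- `ε∘d = ε` -/
  d_counit : (Coalgebra.counit : H →ₗ[k] k) ∘ₗ d = (Coalgebra.counit : A →ₗ[k] k)
  /-- `d(h▷a) = h₁ d(a) S(h₂)` -/
  d_act : d ∘ₗ act = LinearMap.mul' k H
      ∘ₗ map LinearMap.id (LinearMap.mul' k H
            ∘ₗ map LinearMap.id (HopfAlgebra.antipode (R := k) : H →ₗ[k] H)
            ∘ₗ (TensorProduct.comm k H H).toLinearMap)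
      ∘ₗ (TensorProduct.assoc k H H H).toLinearMap
      ∘ₗ map (Coalgebra.comul : H →ₗ[k] H ⊗[k] H) d
  /-- `d(a)▷b = a₁ b S(a₂)` -/
  crossed : act ∘ₗ map d LinearMap.id = LinearMap.mul' k A
      ∘ₗ map LinearMap.id (LinearMap.mul' k A
            ∘ₗ map LinearMap.id (HopfAlgebra.antipode (R := k) : A →ₗ[k] A)
            ∘ₗ (TensorProduct.comm k A A).toLinearMap)
      ∘ₗ (TensorProduct.assoc k A A A).toLinearMap
      ∘ₗ map (Coalgebra.comul : A →ₗ[k] A ⊗[k] A) LinearMap.id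


set_option maxHeartbeats 1000000
set_option synthInstance.maxHeartbeats 1000000

section MyAux

variable {k A H}

/-- Rearranged form of the right-hand side of `d_act` at a pure tensor. -/
lemma myaux0 (c : H) (w : H ⊗[k] H) :
    (LinearMap.mul' k H)
      ((map LinearMap.id (LinearMap.mul' k H
            ∘ₗ map LinearMap.id (HopfAlgebra.antipode (R := k) : H →ₗ[k] H)
            ∘ₗ (TensorProduct.comm k H H).toLinearMap))
        ((TensorProduct.assoc k H H H) (w ⊗ₜ[k] c)))
    = (LinearMap.mul' k H)
        ((LinearMap.lTensor H
            ((LinearMap.mulLeft k c) ∘ₗ (HopfAlgebra.antipode (R := k) : H →ₗ[k] H))) w) := by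
  induction w using TensorProduct.induction_on with
  | zero => simp
  | tmul x v => simp [LinearMap.mul'_apply, LinearMap.mulLeft_apply]
  | add w₁ w₂ ih₁ ih₂ => simp only [add_tmul, map_add, ih₁, ih₂]

/-- Sweedler form of `d(u▷b) = u₁ d(b) S(u₂)`. -/
lemma myaux_dact {act : H ⊗[k] A →ₗ[k] A} {d : A →ₗ[k] H}
    (hcm : HopfCrossedModule k A H act d) (u : H) (b : A) :
    d (act (u ⊗ₜ[k] b))
      = (LinearMap.mul' k H)
          ((LinearMap.lTensor H
              ((LinearMap.mulLeft k (d b)) ∘ₗ (HopfAlgebra.antipode (R := k) : H →ₗ[k] H)))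
            (Coalgebra.comul u)) := by
  have h1 := LinearMap.congr_fun hcm.d_act (u ⊗ₜ[k] b)
  simp only [LinearMap.comp_apply, map_tmul, LinearMap.id_apply] at h1
  rw [h1]
  exact myaux0 (d b) (Coalgebra.comul u)

lemma myaux1 (c : H) (x : H) (v : H ⊗[k] H) :
    (LinearMap.mul' k H)
      ((LinearMap.rTensor H
          (LinearMap.mul' k H ∘ₗ LinearMap.lTensor H
            ((LinearMap.mulLeft k c) ∘ₗ (HopfAlgebra.antipode (R := k) : H →ₗ[k] H))))
        ((TensorProduct.assoc k H H H).symm (x ⊗ₜ[k] v)))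
    = x * c * (LinearMap.mul' k H)
        ((LinearMap.rTensor H (HopfAlgebra.antipode (R := k) : H →ₗ[k] H)) v) := by
  induction v using TensorProduct.induction_on with
  | zero => simp
  | tmul p q =>
    simp [LinearMap.mul'_apply, LinearMap.mulLeft_apply, mul_assoc]
  | add v₁ v₂ ih₁ ih₂ => simp only [tmul_add, map_add, ih₁, ih₂, mul_add]

lemma myaux2 (c : H) (w : H ⊗[k] H) :
    (LinearMap.mul' k H)
      ((LinearMap.rTensor H
          (LinearMap.mul' k H ∘ₗ LinearMap.lTensor H
            ((LinearMap.mulLeft k c) ∘ₗ (HopfAlgebra.antipode (R := k) : H →ₗ[k] H))))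
        ((TensorProduct.assoc k H H H).symm
          ((LinearMap.lTensor H (Coalgebra.comul : H →ₗ[k] H ⊗[k] H)) w)))
    = (LinearMap.mul' k H)
        ((LinearMap.lTensor H
            ((Algebra.linearMap k H) ∘ₗ (Coalgebra.counit : H →ₗ[k] k))) w) * c := by
  induction w using TensorProduct.induction_on with
  | zero => simp
  | tmul x y =>
    rw [LinearMap.lTensor_tmul, myaux1]
    rw [HopfAlgebra.mul_antipode_rTensor_comul_apply]
    simp only [LinearMap.lTensor_tmul, LinearMap.comp_apply, Algebra.linearMap_apply,
      LinearMap.mul'_apply]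
    rw [mul_assoc, mul_assoc, Algebra.commutes]
  | add w₁ w₂ ih₁ ih₂ => simp only [map_add, ih₁, ih₂, add_mul]

/-- Key identity: `∑ d(h₁ ▷ b) h₂ = h · d(b)`. -/
lemma myaux_key {act : H ⊗[k] A →ₗ[k] A} {d : A →ₗ[k] H}
    (hcm : HopfCrossedModule k A H act d) (b : A) (h : H) :
    (LinearMap.mul' k H)
      ((LinearMap.rTensor H (d ∘ₗ act ∘ₗ (TensorProduct.mk k H A).flip b))
        (Coalgebra.comul h)) = h * d b := by
  have e1 : d ∘ₗ act ∘ₗ (TensorProduct.mk k H A).flip b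
      = (LinearMap.mul' k H ∘ₗ LinearMap.lTensor H
            ((LinearMap.mulLeft k (d b)) ∘ₗ (HopfAlgebra.antipode (R := k) : H →ₗ[k] H)))
          ∘ₗ (Coalgebra.comul : H →ₗ[k] H ⊗[k] H) := by
    ext u
    simpa using myaux_dact hcm u b
  rw [e1, LinearMap.rTensor_comp, LinearMap.comp_apply]
  have e2 : (Coalgebra.comul : H →ₗ[k] H ⊗[k] H).rTensor H (Coalgebra.comul h)
      = (TensorProduct.assoc k H H H).symm
          ((LinearMap.lTensor H (Coalgebra.comul : H →ₗ[k] H ⊗[k] H)) (Coalgebra.comul h)) :=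
    (Coalgebra.coassoc_symm_apply h).symm
  rw [e2, myaux2]
  congr 1
  rw [LinearMap.lTensor_comp, LinearMap.comp_apply, Coalgebra.lTensor_counit_comul]
  simp [LinearMap.mul'_apply]

lemma myaux_maptt {d : A →ₗ[k] H} (u : A ⊗[k] A) (v : H ⊗[k] H) :
    map (tmap k A H d) (tmap k A H d)
        ((tensorTensorTensorComm k A A H H) (u ⊗ₜ[k] v))
      = (map d d u) * v := by
  induction u using TensorProduct.induction_on with
  | zero => simp
  | tmul a₁ a₂ =>
    induction v using TensorProduct.induction_on with
    | zero => simp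
    | tmul h₁ h₂ =>
      simp [tmap, LinearMap.mul'_apply, Algebra.TensorProduct.tmul_mul_tmul]
    | add v₁ v₂ ih₁ ih₂ => simp only [tmul_add, map_add, ih₁, ih₂, mul_add]
  | add u₁ u₂ ih₁ ih₂ => simp only [add_tmul, map_add, ih₁, ih₂, add_mul]

end MyAux

/-- Theorem 2.6 (part): `t(a⊗h) = d(a)h` is a bialgebra homomorphism from the smash
product `H1 = A⋊H` to `H`. -/
theorem statement0 (act : H ⊗[k] A →ₗ[k] A) (d : A →ₗ[k] H)
    (hcm : HopfCrossedModule k A H act d) :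
    (∀ (a b : A) (h g : H),
      tmap k A H d (smashMul k A H act ((a ⊗ₜ[k] h) ⊗ₜ[k] (b ⊗ₜ[k] g)))
        = tmap k A H d (a ⊗ₜ[k] h) * tmap k A H d (b ⊗ₜ[k] g))
    ∧ tmap k A H d ((1 : A) ⊗ₜ[k] (1 : H)) = 1
    ∧ (Coalgebra.comul : H →ₗ[k] H ⊗[k] H) ∘ₗ tmap k A H d
        = map (tmap k A H d) (tmap k A H d) ∘ₗ comul1 k A H
    ∧ (Coalgebra.counit : H →ₗ[k] k) ∘ₗ tmap k A H d = counit1 k A H := by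
  refine ⟨?_, ?_, ?_, ?_⟩
  · intro a b h g
    have step : ∀ w : H ⊗[k] H,
        tmap k A H d ((map (LinearMap.mul' k A) LinearMap.id)
          ((TensorProduct.assoc k A A H).symm
            ((map LinearMap.id (map act (LinearMap.mul' k H)
                ∘ₗ (tensorTensorTensorComm k H H A H).toLinearMap))
              ((TensorProduct.assoc k A (H ⊗[k] H) (A ⊗[k] H))
                ((a ⊗ₜ[k] w) ⊗ₜ[k] (b ⊗ₜ[k] g))))))
        = d a * ((LinearMap.mul' k H)
            ((LinearMap.rTensor H (d ∘ₗ act ∘ₗ (TensorProduct.mk k H A).flip b)) w)) * g := by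
      intro w
      induction w using TensorProduct.induction_on with
      | zero => simp
      | tmul x y =>
        simp [tmap, LinearMap.mul'_apply, hcm.d_mul, mul_assoc]
      | add w₁ w₂ ih₁ ih₂ =>
        simp only [add_tmul, tmul_add, map_add, ih₁, ih₂, mul_add, add_mul]
    have e0 : smashMul k A H act ((a ⊗ₜ[k] h) ⊗ₜ[k] (b ⊗ₜ[k] g))
        = (map (LinearMap.mul' k A) LinearMap.id)
          ((TensorProduct.assoc k A A H).symm
            ((map LinearMap.id (map act (LinearMap.mul' k H)
                ∘ₗ (tensorTensorTensorComm k H H A H).toLinearMap))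
              ((TensorProduct.assoc k A (H ⊗[k] H) (A ⊗[k] H))
                ((a ⊗ₜ[k] (Coalgebra.comul h)) ⊗ₜ[k] (b ⊗ₜ[k] g))))) := by
      simp [smashMul]
    rw [e0, step, myaux_key hcm]
    simp [tmap, LinearMap.mul'_apply, mul_assoc]
  · simp [tmap, LinearMap.mul'_apply, hcm.d_one]
  · apply TensorProduct.ext'
    intro a h
    simp only [LinearMap.comp_apply, comul1, LinearEquiv.coe_coe, map_tmul]
    rw [myaux_maptt]
    have : (Coalgebra.comul : H →ₗ[k] H ⊗[k] H) (d a) = map d d (Coalgebra.comul a) :=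
      LinearMap.congr_fun hcm.d_comul a
    simp [tmap, LinearMap.mul'_apply, Bialgebra.comul_mul, this]
  · apply TensorProduct.ext'
    intro a h
    have : (Coalgebra.counit : H →ₗ[k] k) (d a) = (Coalgebra.counit : A →ₗ[k] k) a :=
      LinearMap.congr_fun hcm.d_counit a
    simp [tmap, counit1, LinearMap.mul'_apply, Bialgebra.counit_mul, this, smul_eq_mul]

end
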